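/- arXiv:2504.12086 — 2 statements merged into one kernel-verified Lean document; each statement's English description precedes it below -/
import Mathlib

section
/- Elliptical potential lemma: Let λ ≥ 1 and x₁,…,x_T ∈ ℝ^d with ‖x_t‖₂ ≤ 1 for all t. Define V_t = λI + ∑_{s=1}^t x_s x_sᵀ. Then ∑_{t=1}^T ‖x_t‖²_{V_{t-1}⁻¹} ≤ 2 log(det(V_T)/det(λI)). -/
/-!
By the matrix determinant lemma, `det V_{t+1} = det V_t * (1 + ‖x_t‖²_{V_t⁻¹})`, so the sum of
`log (1 + ‖x_t‖²_{V_t⁻¹})` telescopes to `log (det V_T / det V_0)`. Since `V_t ≥ λ I` with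
`λ ≥ 1` and `‖x_t‖ ≤ 1`, each `‖x_t‖²_{V_t⁻¹}` lies in `[0, 1]`, where `u ≤ 2 log (1 + u)`.
-/

open Matrix Finset

theorem Real.le_two_mul_log_one_add {u : ℝ} (h0 : 0 ≤ u) (h1 : u ≤ 1) :
    u ≤ 2 * Real.log (1 + u) := by
  have hlog := Real.one_sub_inv_le_log_of_pos (x := 1 + u) (by linarith)
  have : 1 - (1 + u)⁻¹ = u / (1 + u) := by field_simp; ring
  rw [this, div_le_iff₀ (by linarith)] at hlog
  nlinarith

namespace Matrix

variable {n : Type*} [DecidableEq n]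

theorem det_add_vecMulVec [Fintype n] {K : Type*} [Field K] {A : Matrix n n K} (hA : IsUnit A.det)
    (u v : n → K) : (A + vecMulVec u v).det = A.det * (1 + v ⬝ᵥ A⁻¹ *ᵥ u) := by
  have hfactor :
      A + vecMulVec u v = A * (1 + replicateCol Unit (A⁻¹ *ᵥ u) * replicateRow Unit v) := by
    rw [Matrix.mul_add, mul_one, replicateCol_mulVec, ← Matrix.mul_assoc, ← Matrix.mul_assoc,
      mul_nonsing_inv _ hA, Matrix.one_mul, vecMulVec_eq Unit]
  rw [hfactor, det_mul, det_one_add_replicateCol_mul_replicateRow]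

theorem posDef_of_posSemidef_sub_smul_one {A : Matrix n n ℝ} {c : ℝ} (hc : 0 < c)
    (hA : (A - c • 1).PosSemidef) : A.PosDef := by
  have hc1 : (c • 1 : Matrix n n ℝ).PosDef := by
    rw [smul_one_eq_diagonal]
    exact posDef_diagonal_iff.2 fun _ => hc
  simpa using hc1.add_posSemidef hA

theorem dotProduct_inv_mulVec_le_of_posSemidef_sub_smul_one [Fintype n] {A : Matrix n n ℝ}
    {c : ℝ} (hc : 0 < c) (hA : (A - c • 1).PosSemidef) (v : n → ℝ) :
    v ⬝ᵥ A⁻¹ *ᵥ v ≤ (v ⬝ᵥ v) / c := by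
  have hdet : IsUnit A.det :=
    (isUnit_iff_isUnit_det A).1 (posDef_of_posSemidef_sub_smul_one hc hA).isUnit
  set y := A⁻¹ *ᵥ v
  have hAy : A *ᵥ y = v := by rw [mulVec_mulVec, mul_nonsing_inv _ hdet, one_mulVec]
  have hlower : c * (y ⬝ᵥ y) ≤ v ⬝ᵥ y := by
    have := hA.dotProduct_mulVec_nonneg y
    simp only [star_trivial, sub_mulVec, smul_mulVec, one_mulVec, dotProduct_sub,
      dotProduct_smul, hAy, dotProduct_comm y v, smul_eq_mul] at this
    linarith
  -- `0 ≤ ‖v - c y‖² = ‖v‖² - 2c⟪v, y⟫ + c²‖y‖² ≤ ‖v‖² - c⟪v, y⟫` by `hlower`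
  have hsq := dotProduct_self_star_nonneg (v - c • y)
  simp only [star_trivial, sub_dotProduct, dotProduct_sub, smul_dotProduct, dotProduct_smul,
    dotProduct_comm y v, smul_eq_mul] at hsq
  rw [le_div_iff₀ hc]
  nlinarith

theorem sum_log_one_add_eq_log_det_div [Fintype n] {V : ℕ → Matrix n n ℝ} {x : ℕ → n → ℝ}
    (hstep : ∀ t, V (t + 1) = V t + vecMulVec (x t) (x t)) (hpos : ∀ t, (V t).PosDef) (T : ℕ) :
    ∑ t ∈ range T, Real.log (1 + x t ⬝ᵥ (V t)⁻¹ *ᵥ x t) = Real.log ((V T).det / (V 0).det) := by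
  have hdet (t : ℕ) : (V t).det ≠ 0 := (hpos t).det_pos.ne'
  have hlog (t : ℕ) :
      Real.log (1 + x t ⬝ᵥ (V t)⁻¹ *ᵥ x t) = Real.log (V (t + 1)).det - Real.log (V t).det := by
    rw [← Real.log_div (hdet (t + 1)) (hdet t), hstep,
      det_add_vecMulVec (isUnit_iff_ne_zero.2 (hdet t)), mul_div_cancel_left₀ _ (hdet t)]
  rw [sum_congr rfl fun t _ => hlog t, sum_range_sub (fun t => Real.log (V t).det),
    Real.log_div (hdet T) (hdet 0)]

end Matrix

theorem elliptical_potential_lemma {d : ℕ} (T : ℕ) (lam : ℝ) (hlam : 1 ≤ lam)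
    (x : ℕ → Fin d → ℝ)
    (hx : ∀ t, ∑ i, (x t i) ^ 2 ≤ 1)
    (V : ℕ → Matrix (Fin d) (Fin d) ℝ)
    (hV : ∀ t, V t = lam • (1 : Matrix (Fin d) (Fin d) ℝ)
        + ∑ s ∈ Finset.range t, vecMulVec (x s) (x s)) :
    ∑ t ∈ Finset.range T, x t ⬝ᵥ (V t)⁻¹ *ᵥ x t
      ≤ 2 * Real.log ((V T).det / (lam • (1 : Matrix (Fin d) (Fin d) ℝ)).det) := by
  have hlam0 : 0 < lam := by linarith
  have hgram (t : ℕ) : (V t - lam • 1).PosSemidef := by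
    rw [hV t, add_sub_cancel_left]
    exact posSemidef_sum _ fun s _ => by simpa using posSemidef_vecMulVec_self_star (x s)
  have hpos (t : ℕ) : (V t).PosDef := posDef_of_posSemidef_sub_smul_one hlam0 (hgram t)
  have hstep (t : ℕ) : V (t + 1) = V t + vecMulVec (x t) (x t) := by
    rw [hV, hV, sum_range_succ, add_assoc]
  have hV0 : V 0 = lam • 1 := by simp [hV 0]
  have hu0 (t : ℕ) : 0 ≤ x t ⬝ᵥ (V t)⁻¹ *ᵥ x t := by
    simpa using (hpos t).posSemidef.inv.dotProduct_mulVec_nonneg (x t)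
  have hu1 (t : ℕ) : x t ⬝ᵥ (V t)⁻¹ *ᵥ x t ≤ 1 := by
    have hnorm : x t ⬝ᵥ x t ≤ 1 := by simpa [dotProduct, sq] using hx t
    refine (dotProduct_inv_mulVec_le_of_posSemidef_sub_smul_one hlam0 (hgram t) (x t)).trans ?_
    rw [div_le_one hlam0]
    linarith
  calc ∑ t ∈ range T, x t ⬝ᵥ (V t)⁻¹ *ᵥ x t
      ≤ ∑ t ∈ range T, 2 * Real.log (1 + x t ⬝ᵥ (V t)⁻¹ *ᵥ x t) :=
        sum_le_sum fun t _ => Real.le_two_mul_log_one_add (hu0 t) (hu1 t)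
    _ = 2 * Real.log ((V T).det / (lam • (1 : Matrix (Fin d) (Fin d) ℝ)).det) := by
        rw [← mul_sum, sum_log_one_add_eq_log_det_div hstep hpos, hV0]
end

section
/- Missing-reward weighted norm bound: Let A be a d×d positive definite matrix with A ⪰ λI, λ ≥ 1, and suppose V = A + W with W = ∑_{j=1}^G w_j w_jᵀ where ‖w_j‖₂ ≤ 1. Then for any x with ‖x‖₂ ≤ 1, xᵀ V⁻¹ W A⁻¹ x ≤ (G/λ) xᵀ V⁻¹ x. -/
open Matrix Finset

-- quadratic form of vecMulVec
lemma dot_vecMulVec {d : ℕ} (u v x y : Fin d → ℝ) :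
    x ⬝ᵥ (vecMulVec u v) *ᵥ y = (x ⬝ᵥ u) * (v ⬝ᵥ y) := by
  simp only [dotProduct, vecMulVec, mulVec, Matrix.of_apply, Finset.mul_sum, Finset.sum_mul]
  rw [Finset.sum_comm]
  congr 1; ext i; congr 1; ext j; ring

lemma sum_mulVec' {d G : ℕ} (M : Fin G → Matrix (Fin d) (Fin d) ℝ) (x : Fin d → ℝ) :
    (∑ j, M j) *ᵥ x = ∑ j, M j *ᵥ x := by
  ext i
  simp only [mulVec, dotProduct, Matrix.sum_apply, Finset.sum_mul, Finset.sum_apply]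
  rw [Finset.sum_comm]

lemma dotProduct_sum' {d G : ℕ} (z : Fin d → ℝ) (v : Fin G → Fin d → ℝ) :
    z ⬝ᵥ (∑ j, v j) = ∑ j, z ⬝ᵥ v j := by
  simp only [dotProduct, Finset.sum_apply, Finset.mul_sum]
  rw [Finset.sum_comm]

lemma dot_symm {d : ℕ} {M : Matrix (Fin d) (Fin d) ℝ} (hM : Mᵀ = M) (x y : Fin d → ℝ) :
    x ⬝ᵥ M *ᵥ y = y ⬝ᵥ M *ᵥ x := by
  rw [Matrix.dotProduct_mulVec, ← Matrix.mulVec_transpose, hM, dotProduct_comm]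

-- Cauchy-Schwarz for PSD quadratic forms
lemma cs_psd {d : ℕ} {M : Matrix (Fin d) (Fin d) ℝ} (hM : M.PosSemidef) (x y : Fin d → ℝ) :
    (x ⬝ᵥ M *ᵥ y) ^ 2 ≤ (x ⬝ᵥ M *ᵥ x) * (y ⬝ᵥ M *ᵥ y) := by
  classical
  obtain ⟨S, hS'⟩ : ∃ S : Matrix (Fin d) (Fin d) ℝ, M = Sᵀ * S := by
    open scoped MatrixOrder in
    obtain ⟨B, hB⟩ := CStarAlgebra.nonneg_iff_eq_star_mul_self.mp hM.nonneg
    exact ⟨B, by rw [hB, star_eq_conjTranspose, conjTranspose_eq_transpose_of_trivial]⟩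
  have key : ∀ a b : Fin d → ℝ, a ⬝ᵥ M *ᵥ b = (S *ᵥ a) ⬝ᵥ (S *ᵥ b) := by
    intro a b
    rw [hS', ← Matrix.mulVec_mulVec, Matrix.dotProduct_mulVec,
      ← Matrix.mulVec_transpose, transpose_transpose]
  rw [key x y, key x x, key y y]
  have := Finset.sum_mul_sq_le_sq_mul_sq Finset.univ (S *ᵥ x) (S *ᵥ y)
  simpa [dotProduct, pow_two, mul_comm, Finset.mul_sum] using this

theorem missing_reward_weighted_norm_bound {d : ℕ} (G : ℕ) (lam : ℝ) (hlam : 1 ≤ lam)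
    (A W V : Matrix (Fin d) (Fin d) ℝ)
    (hA : A.PosDef)
    (hAlam : (A - lam • (1 : Matrix (Fin d) (Fin d) ℝ)).PosSemidef)
    (w : Fin G → Fin d → ℝ) (hw : ∀ j, ∑ i, (w j i) ^ 2 ≤ 1)
    (hW : W = ∑ j, vecMulVec (w j) (w j))
    (hV : V = A + W)
    (x : Fin d → ℝ) (hx : ∑ i, (x i) ^ 2 ≤ 1) :
    x ⬝ᵥ (V⁻¹ * W * A⁻¹) *ᵥ x ≤ ((G : ℝ) / lam) * (x ⬝ᵥ V⁻¹ *ᵥ x) := by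
  have hlam0 : (0:ℝ) < lam := lt_of_lt_of_le one_pos hlam
  -- W is PSD
  have hWquad : ∀ z : Fin d → ℝ, z ⬝ᵥ W *ᵥ z = ∑ j, (w j ⬝ᵥ z) ^ 2 := by
    intro z
    rw [hW, sum_mulVec', dotProduct_sum']
    refine Finset.sum_congr rfl fun j _ => ?_
    rw [dot_vecMulVec, dotProduct_comm z (w j), pow_two]
  have hWsymm : Wᵀ = W := by
    rw [hW, Matrix.transpose_sum]
    refine Finset.sum_congr rfl fun j _ => ?_
    ext i k; simp [vecMulVec_apply, mul_comm]
  have hWpsd : W.PosSemidef := by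
    refine .of_dotProduct_mulVec_nonneg (by simpa [Matrix.IsHermitian] using hWsymm) fun z => ?_
    simp only [star_trivial]
    rw [hWquad z]
    exact Finset.sum_nonneg fun j _ => sq_nonneg _
  have hVpd : V.PosDef := hV ▸ hA.add_posSemidef hWpsd
  have hAinv : A⁻¹.PosDef := hA.inv
  have hVinv : V⁻¹.PosDef := hVpd.inv
  have hAdet : IsUnit A.det := isUnit_iff_ne_zero.mpr hA.det_pos.ne'
  have hVdet : IsUnit V.det := isUnit_iff_ne_zero.mpr hVpd.det_pos.ne'
  -- key matrix identity
  have hkey : V⁻¹ * W * A⁻¹ = A⁻¹ - V⁻¹ := by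
    have hWVA : W = V - A := by rw [hV, add_sub_cancel_left]
    rw [hWVA, Matrix.mul_sub, Matrix.nonsing_inv_mul V hVdet, Matrix.sub_mul, Matrix.one_mul,
      Matrix.mul_assoc, Matrix.mul_nonsing_inv A hAdet, Matrix.mul_one]
  -- notation
  set z : Fin d → ℝ := A⁻¹ *ᵥ x with hz
  set y : Fin d → ℝ := V⁻¹ *ᵥ x with hy
  set t : ℝ := x ⬝ᵥ A⁻¹ *ᵥ x with ht
  set s : ℝ := x ⬝ᵥ V⁻¹ *ᵥ x with hs
  have ht0 : 0 ≤ t := by simpa using hAinv.posSemidef.dotProduct_mulVec_nonneg x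
  have hs0 : 0 ≤ s := by simpa using hVinv.posSemidef.dotProduct_mulVec_nonneg x
  have hAz : A *ᵥ z = x := by
    rw [hz, Matrix.mulVec_mulVec, Matrix.mul_nonsing_inv A hAdet, Matrix.one_mulVec]
  have hVy : V *ᵥ y = x := by
    rw [hy, Matrix.mulVec_mulVec, Matrix.mul_nonsing_inv V hVdet, Matrix.one_mulVec]
  have htz : z ⬝ᵥ A *ᵥ z = t := by rw [hAz, ht, hz, dotProduct_comm]
  have hsy : y ⬝ᵥ V *ᵥ y = s := by rw [hVy, hs, hy, dotProduct_comm]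
  have htzy : z ⬝ᵥ V *ᵥ y = t := by rw [hVy, ht, hz, dotProduct_comm]
  -- lambda bound : lam * ‖z‖² ≤ zᵀAz
  have hnorm : lam * (z ⬝ᵥ z) ≤ z ⬝ᵥ A *ᵥ z := by
    have h := hAlam.dotProduct_mulVec_nonneg z
    simp only [star_trivial, Matrix.sub_mulVec, dotProduct_sub, Matrix.smul_mulVec,
      Matrix.one_mulVec, dotProduct_smul, smul_eq_mul] at h
    linarith
  -- W bound : zᵀWz ≤ G * ‖z‖²
  have hWz : z ⬝ᵥ W *ᵥ z ≤ (G : ℝ) * (z ⬝ᵥ z) := by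
    rw [hWquad z]
    calc ∑ j, (w j ⬝ᵥ z) ^ 2 ≤ ∑ j : Fin G, z ⬝ᵥ z := by
          refine Finset.sum_le_sum fun j _ => ?_
          have hcs := Finset.sum_mul_sq_le_sq_mul_sq Finset.univ (w j) z
          calc (w j ⬝ᵥ z) ^ 2 = (∑ i, w j i * z i) ^ 2 := rfl
            _ ≤ (∑ i, (w j i) ^ 2) * ∑ i, (z i) ^ 2 := hcs
            _ ≤ 1 * ∑ i, (z i) ^ 2 := by
                refine mul_le_mul_of_nonneg_right (hw j) ?_
                exact Finset.sum_nonneg fun i _ => sq_nonneg _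
            _ = z ⬝ᵥ z := by rw [one_mul]; simp [dotProduct, pow_two]
      _ = (G : ℝ) * (z ⬝ᵥ z) := by simp [mul_comm]
  have hWzt : z ⬝ᵥ W *ᵥ z ≤ ((G : ℝ) / lam) * t := by
    calc z ⬝ᵥ W *ᵥ z ≤ (G : ℝ) * (z ⬝ᵥ z) := hWz
      _ = ((G : ℝ) / lam) * (lam * (z ⬝ᵥ z)) := by field_simp
      _ ≤ ((G : ℝ) / lam) * t := by
          refine mul_le_mul_of_nonneg_left ?_ (by positivity)
          rw [← htz]; exact hnorm
  -- zᵀVz ≤ (1 + G/lam) t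
  have hzVz : z ⬝ᵥ V *ᵥ z ≤ (1 + (G : ℝ) / lam) * t := by
    rw [hV, Matrix.add_mulVec, dotProduct_add, htz]
    linarith [hWzt]
  -- Cauchy-Schwarz
  have hcs : t ^ 2 ≤ (z ⬝ᵥ V *ᵥ z) * s := by
    rw [← htzy, ← hsy]
    exact cs_psd hVpd.posSemidef z y
  have hts : t ≤ (1 + (G : ℝ) / lam) * s := by
    rcases eq_or_lt_of_le ht0 with h0 | hpos
    · rw [← h0]; positivity
    · have h1 : t * t ≤ ((1 + (G : ℝ) / lam) * s) * t := by
        calc t * t = t ^ 2 := (pow_two t).symm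
          _ ≤ (z ⬝ᵥ V *ᵥ z) * s := hcs
          _ ≤ ((1 + (G : ℝ) / lam) * t) * s := mul_le_mul_of_nonneg_right hzVz hs0
          _ = ((1 + (G : ℝ) / lam) * s) * t := by ring
      exact le_of_mul_le_mul_right h1 hpos
  -- conclude
  rw [hkey, Matrix.sub_mulVec, dotProduct_sub, ← ht, ← hs]
  linarith
end
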